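/- arXiv:1308.5417 — 2 statements merged into one kernel-verified Lean document; each statement's English description precedes it below -/
import Mathlib

section
/- Two symmetric affine connections ∇ = (Γ^i_{jk}) and ∇̄ = (Γ̄^i_{jk}) on a manifold have the same unparameterized geodesics if and only if there exists a 1-form φ such that Γ̄^i_{jk} = Γ^i_{jk} + δ^i_k φ_j + δ^i_j φ_k (projective equivalence of connections, Levi-Civita/Weyl). -/
/-!
STATEMENT 8: Two symmetric affine connections `∇ = (Γ^i_{jk})` and `∇̄ = (Γ̄^i_{jk})` have the
same unparameterized geodesics if and only if there is a 1-form `φ` with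
`Γ̄^i_{jk} = Γ^i_{jk} + δ^i_k φ_j + δ^i_j φ_k` (projective equivalence, Levi-Civita/Weyl).

Coordinate model on `ℝⁿ`: a regular curve is an unparameterized geodesic of `Γ` on an open
interval if `γ'' + Γ(γ)(γ',γ')` is everywhere proportional to `γ'` there.
-/

/-- `γ` is an unparameterized geodesic of the connection `Γ` on the set `s`:
at every time in `s`, the acceleration `γ''^i + Γ^i_{jk}(γ) γ'^j γ'^k` is proportional
to the velocity `γ'`. -/
def IsUnparamGeodOn {n : ℕ} (Γ : (Fin n → ℝ) → Fin n → Fin n → Fin n → ℝ)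
    (γ : ℝ → (Fin n → ℝ)) (s : Set ℝ) : Prop :=
  ∀ t ∈ s, ∃ a : ℝ, ∀ i : Fin n,
    deriv (fun u => deriv γ u i) t
      + ∑ j : Fin n, ∑ k : Fin n, Γ (γ t) i j k * deriv γ t j * deriv γ t k
    = a * deriv γ t i

lemma sum_delta_phi {n : ℕ} (φ v : Fin n → ℝ) (i : Fin n) :
    ∑ j : Fin n, ∑ k : Fin n,
      ((if i = k then φ j else 0) + (if i = j then φ k else 0)) * v j * v k
      = (2 * ∑ j : Fin n, φ j * v j) * v i := by
  have h1 : ∀ j : Fin n, ∑ k : Fin n, (if i = k then φ j else 0) * v j * v k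
      = φ j * v j * v i := by
    intro j
    rw [Finset.sum_eq_single i]
    · simp
    · intro k _ hk; simp [Ne.symm hk]
    · simp
  have h2 : ∑ j : Fin n, ∑ k : Fin n, (if i = j then φ k else 0) * v j * v k
      = ∑ k : Fin n, φ k * v i * v k := by
    rw [Finset.sum_eq_single i]
    · simp
    · intro j _ hj
      apply Finset.sum_eq_zero
      intro k _
      simp [Ne.symm hj]
    · simp
  calc ∑ j : Fin n, ∑ k : Fin n,
      ((if i = k then φ j else 0) + (if i = j then φ k else 0)) * v j * v k
      = ∑ j : Fin n, (∑ k : Fin n, (if i = k then φ j else 0) * v j * v k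
          + ∑ k : Fin n, (if i = j then φ k else 0) * v j * v k) := by
        refine Finset.sum_congr rfl fun j _ => ?_
        rw [← Finset.sum_add_distrib]
        exact Finset.sum_congr rfl fun k _ => by ring
    _ = (∑ j : Fin n, φ j * v j * v i) + ∑ k : Fin n, φ k * v i * v k := by
        rw [Finset.sum_add_distrib, h2]
        simp only [h1]
    _ = (2 * ∑ j : Fin n, φ j * v j) * v i := by
        have h3 : ∑ k : Fin n, φ k * v i * v k = (∑ j : Fin n, φ j * v j) * v i := by
          rw [Finset.sum_mul]
          exact Finset.sum_congr rfl fun k _ => by ring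
        rw [h3, ← Finset.sum_mul]
        ring

lemma geod_shift {n : ℕ} (Γ Γ' : (Fin n → ℝ) → Fin n → Fin n → Fin n → ℝ)
    (φ : (Fin n → ℝ) → Fin n → ℝ)
    (h : ∀ x i j k, Γ' x i j k = Γ x i j k
        + (if i = k then φ x j else 0) + (if i = j then φ x k else 0))
    (γ : ℝ → Fin n → ℝ) (s : Set ℝ) (hg : IsUnparamGeodOn Γ γ s) :
    IsUnparamGeodOn Γ' γ s := by
  intro t ht
  obtain ⟨a, ha⟩ := hg t ht
  refine ⟨a + 2 * ∑ j : Fin n, φ (γ t) j * deriv γ t j, fun i => ?_⟩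
  have hkey := sum_delta_phi (φ (γ t)) (deriv γ t) i
  have hsplit : ∑ j : Fin n, ∑ k : Fin n, Γ' (γ t) i j k * deriv γ t j * deriv γ t k
      = (∑ j : Fin n, ∑ k : Fin n, Γ (γ t) i j k * deriv γ t j * deriv γ t k)
        + (2 * ∑ j : Fin n, φ (γ t) j * deriv γ t j) * deriv γ t i := by
    rw [← hkey, ← Finset.sum_add_distrib]
    refine Finset.sum_congr rfl fun j _ => ?_
    rw [← Finset.sum_add_distrib]
    refine Finset.sum_congr rfl fun k _ => ?_
    rw [h (γ t) i j k]
    ring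
  rw [hsplit]
  linear_combination ha i
set_option maxHeartbeats 1000000 in
lemma exists_geodesic {n : ℕ} (Γ : (Fin n → ℝ) → Fin n → Fin n → Fin n → ℝ)
    (hΓ : ∀ i j k, ContDiff ℝ (⊤ : ℕ∞) (fun x => Γ x i j k)) (x v : Fin n → ℝ) (hv : v ≠ 0) :
    ∃ (γ : ℝ → Fin n → ℝ) (ε : ℝ), 0 < ε ∧ γ 0 = x ∧ deriv γ 0 = v ∧
      ContDiffOn ℝ 2 γ (Set.Ioo (-ε) ε) ∧ (∀ t ∈ Set.Ioo (-ε) ε, deriv γ t ≠ 0) ∧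
      IsUnparamGeodOn Γ γ (Set.Ioo (-ε) ε) := by
  classical
  set F : ((Fin n → ℝ) × (Fin n → ℝ)) → ((Fin n → ℝ) × (Fin n → ℝ)) :=
    fun p => (p.2, fun i => -∑ j : Fin n, ∑ k : Fin n, Γ p.1 i j k * p.2 j * p.2 k) with hF
  have hFc : ContDiff ℝ 1 F := by
    apply ContDiff.prodMk
    · exact contDiff_snd
    · rw [contDiff_pi]
      intro i
      apply ContDiff.neg
      apply ContDiff.sum
      intro j _
      apply ContDiff.sum
      intro k _
      exact (((hΓ i j k).of_le (by simp)).comp contDiff_fst).mul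
          (((ContinuousLinearMap.proj j : (Fin n → ℝ) →L[ℝ] ℝ).contDiff).comp contDiff_snd)
        |>.mul (((ContinuousLinearMap.proj k : (Fin n → ℝ) →L[ℝ] ℝ).contDiff).comp contDiff_snd)
  obtain ⟨f, hf0, ε₀, hε₀, hode⟩ :=
    ContDiffAt.exists_forall_mem_closedBall_exists_eq_forall_mem_Ioo_hasDerivAt₀ (x₀ := (x, v)) hFc.contDiffAt 0
  rw [zero_sub, zero_add] at hode
  set γ : ℝ → Fin n → ℝ := fun t => (f t).1 with hγ
  set w : ℝ → Fin n → ℝ := fun t => (f t).2 with hw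
  have hγ' : ∀ t ∈ Set.Ioo (-ε₀) ε₀, HasDerivAt γ (w t) t := by
    intro t ht
    have h := (hode t ht)
    have := (ContinuousLinearMap.fst ℝ (Fin n → ℝ) (Fin n → ℝ)).hasFDerivAt.comp_hasDerivAt t h
    exact this
  have hw' : ∀ t ∈ Set.Ioo (-ε₀) ε₀,
      HasDerivAt w (fun i => -∑ j : Fin n, ∑ k : Fin n,
        Γ (γ t) i j k * w t j * w t k) t := by
    intro t ht
    have h := (hode t ht)
    have := (ContinuousLinearMap.snd ℝ (Fin n → ℝ) (Fin n → ℝ)).hasFDerivAt.comp_hasDerivAt t h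
    exact this
  have h0mem : (0:ℝ) ∈ Set.Ioo (-ε₀) ε₀ := ⟨by linarith, hε₀⟩
  have hw0 : w 0 = v := by rw [hw]; simp [hf0]
  -- shrink to keep w ≠ 0
  have hcw : ContinuousAt w 0 := (hw' 0 h0mem).continuousAt
  have hnhds : {u : Fin n → ℝ | u ≠ 0} ∈ nhds (w 0) := by
    rw [hw0]
    exact (isOpen_compl_singleton (x := (0 : Fin n → ℝ))).mem_nhds hv
  obtain ⟨ε₁, hε₁, hball⟩ := Metric.mem_nhds_iff.mp (hcw.preimage_mem_nhds hnhds)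
  set ε := min ε₀ (ε₁ / 2) with hε
  have hεpos : 0 < ε := lt_min hε₀ (by linarith)
  have hsub : Set.Ioo (-ε) ε ⊆ Set.Ioo (-ε₀) ε₀ :=
    Set.Ioo_subset_Ioo (neg_le_neg (min_le_left _ _)) (min_le_left _ _)
  have hsubball : Set.Ioo (-ε) ε ⊆ Metric.ball 0 ε₁ := by
    intro t ht
    rw [Real.ball_eq_Ioo, zero_sub, zero_add]
    have h1 : ε ≤ ε₁ / 2 := min_le_right _ _
    constructor <;> [nlinarith [ht.1]; nlinarith [ht.2]]
  have hderiv : ∀ t ∈ Set.Ioo (-ε) ε, deriv γ t = w t :=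
    fun t ht => (hγ' t (hsub ht)).deriv
  have h0 : (0:ℝ) ∈ Set.Ioo (-ε) ε := ⟨by linarith, hεpos⟩
  have hopen : IsOpen (Set.Ioo (-ε) ε) := isOpen_Ioo
  have hγ0 : γ 0 = x := by rw [hγ]; simp [hf0]
  have hγ'0 : deriv γ 0 = v := by rw [hderiv 0 h0, hw0]
  have hwcont : ContinuousOn w (Set.Ioo (-ε) ε) :=
    fun t ht => (hw' t (hsub ht)).continuousAt.continuousWithinAt
  have hγcont : ContinuousOn γ (Set.Ioo (-ε) ε) :=
    fun t ht => (hγ' t (hsub ht)).continuousAt.continuousWithinAt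
  have hw1 : ContDiffOn ℝ 1 w (Set.Ioo (-ε) ε) := by
    rw [show (1 : WithTop ℕ∞) = 0 + 1 by norm_num, contDiffOn_succ_iff_deriv_of_isOpen hopen]
    refine ⟨fun t ht => (hw' t (hsub ht)).differentiableAt.differentiableWithinAt, by simp, ?_⟩
    rw [contDiffOn_zero]
    have heq : Set.EqOn (deriv w) (fun t => fun i => -∑ j : Fin n, ∑ k : Fin n,
        Γ (γ t) i j k * w t j * w t k) (Set.Ioo (-ε) ε) :=
      fun t ht => (hw' t (hsub ht)).deriv
    refine ContinuousOn.congr ?_ heq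
    rw [continuousOn_pi]
    intro i
    apply ContinuousOn.neg
    apply continuousOn_finset_sum
    intro j _
    apply continuousOn_finset_sum
    intro k _
    exact ((((hΓ i j k).continuous.comp_continuousOn hγcont)).mul
        ((continuous_apply j).comp_continuousOn hwcont)).mul
      ((continuous_apply k).comp_continuousOn hwcont)
  have hγ2 : ContDiffOn ℝ 2 γ (Set.Ioo (-ε) ε) := by
    rw [show (2 : WithTop ℕ∞) = 1 + 1 by norm_num, contDiffOn_succ_iff_deriv_of_isOpen hopen]
    exact ⟨fun t ht => (hγ' t (hsub ht)).differentiableAt.differentiableWithinAt, by simp,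
      hw1.congr hderiv⟩
  refine ⟨γ, ε, hεpos, hγ0, hγ'0, hγ2, ?_, ?_⟩
  · intro t ht
    rw [hderiv t ht]
    exact hball (hsubball ht)
  · intro t ht
    refine ⟨0, fun i => ?_⟩
    have he : (fun u => deriv γ u i) =ᶠ[nhds t] (fun u => w u i) := by
      filter_upwards [hopen.mem_nhds ht] with u hu
      rw [hderiv u hu]
    have hd2 : deriv (fun u => deriv γ u i) t
        = -∑ j : Fin n, ∑ k : Fin n, Γ (γ t) i j k * w t j * w t k := by
      rw [he.deriv_eq]
      exact ((hasDerivAt_pi.mp (hw' t (hsub ht))) i).deriv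
    rw [hd2, hderiv t ht]
    ring
set_option maxHeartbeats 2000000 in
lemma bilin_prop {n : ℕ} (D : Fin n → Fin n → Fin n → ℝ)
    (hsymm : ∀ i j k, D i j k = D i k j)
    (H : ∀ v : Fin n → ℝ, ∃ a : ℝ, ∀ i,
      ∑ j : Fin n, ∑ k : Fin n, D i j k * v j * v k = a * v i) :
    ∃ φ : Fin n → ℝ, ∀ i j k, D i j k
      = (if i = k then φ j else 0) + (if i = j then φ k else 0) := by
  classical
  set B : (Fin n → ℝ) → (Fin n → ℝ) → Fin n → ℝ :=
    fun u w i => ∑ j : Fin n, ∑ k : Fin n, D i j k * u j * w k with hB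
  set a : (Fin n → ℝ) → ℝ := fun v => (H v).choose with haa
  have ha : ∀ v i, B v v i = a v * v i := fun v => (H v).choose_spec
  have hBsymm : ∀ u w i, B u w i = B w u i := by
    intro u w i
    rw [hB]
    simp only
    rw [Finset.sum_comm]
    exact Finset.sum_congr rfl fun k _ => Finset.sum_congr rfl fun j _ => by
      rw [hsymm]; ring
  have hadd : ∀ u u' w i, B (u + u') w i = B u w i + B u' w i := by
    intro u u' w i
    rw [hB]; simp only
    rw [← Finset.sum_add_distrib]
    refine Finset.sum_congr rfl fun j _ => ?_
    rw [← Finset.sum_add_distrib]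
    refine Finset.sum_congr rfl fun k _ => ?_
    simp only [Pi.add_apply]; ring
  have hsmulr : ∀ (c : ℝ) u w i, B u (c • w) i = c * B u w i := by
    intro c u w i
    rw [hB]; simp only
    rw [Finset.mul_sum]
    refine Finset.sum_congr rfl fun j _ => ?_
    rw [Finset.mul_sum]
    refine Finset.sum_congr rfl fun k _ => ?_
    simp only [Pi.smul_apply, smul_eq_mul]; ring
  have hsmull : ∀ (c : ℝ) u w i, B (c • u) w i = c * B u w i := by
    intro c u w i
    rw [hBsymm, hsmulr, hBsymm]
  have hI : ∀ u w i, a (u + w) * (u i + w i)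
      = a u * u i + a w * w i + 2 * B u w i := by
    intro u w i
    have h1 : B (u + w) (u + w) i = B u u i + 2 * B u w i + B w w i := by
      rw [hadd]
      have h2 : ∀ z, B z (u + w) i = B z u i + B z w i := by
        intro z; rw [hBsymm, hadd, hBsymm u z, hBsymm w z]
      rw [h2, h2, hBsymm w u]
      ring
    have h3 := ha (u + w) i
    rw [h1, ha u i, ha w i] at h3
    simp only [Pi.add_apply] at h3
    linarith
  have hhom : ∀ (c : ℝ) v, c ≠ 0 → v ≠ 0 → a (c • v) = c * a v := by
    intro c v hc hv
    obtain ⟨i, hi⟩ : ∃ i, v i ≠ 0 := by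
      by_contra hcon
      push_neg at hcon
      exact hv (funext fun i => hcon i)
    have h1 := ha (c • v) i
    rw [hsmull, hsmulr, ha v i] at h1
    simp only [Pi.smul_apply, smul_eq_mul] at h1
    have key : (a (c • v)) * v i * c = (c * a v) * v i * c := by linear_combination (-1 : ℝ) * h1
    have := mul_right_cancel₀ hc key
    exact (mul_right_cancel₀ hi this)
  have hadd_a : ∀ u w : Fin n → ℝ,
      (∀ s t : ℝ, s • u + t • w = 0 → s = 0 ∧ t = 0) → a (u + w) = a u + a w := by
    intro u w hind
    have hw : w ≠ 0 := by
      intro h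
      have := (hind 0 1 (by simp [h])).2
      norm_num at this
    have e2 : ∀ i, a (u + (2:ℝ) • w) * (u i + 2 * w i)
        = a u * u i + (2 * a w) * (2 * w i) + 2 * (2 * B u w i) := by
      intro i
      have h2 := hI u ((2:ℝ) • w) i
      rw [hsmulr, hhom 2 w two_ne_zero hw] at h2
      simpa [Pi.smul_apply, smul_eq_mul] using h2
    have hst := hind (2 * a (u + w) - a (u + (2:ℝ) • w) - a u)
        (2 * a (u + w) - 2 * a (u + (2:ℝ) • w) + 2 * a w) (by
      funext i
      simp only [Pi.add_apply, Pi.smul_apply, smul_eq_mul, Pi.zero_apply]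
      linear_combination 2 * hI u w i - e2 i)
    have hs := hst.1
    have ht := hst.2
    linarith
  have hclaim : ∀ u w : Fin n → ℝ, u ≠ 0 → w ≠ 0 → ∀ i,
      2 * B u w i = a w * u i + a u * w i := by
    intro u w hu hw
    by_cases hind : ∀ s t : ℝ, s • u + t • w = 0 → s = 0 ∧ t = 0
    · have hA := hadd_a u w hind
      intro i
      have h := hI u w i
      rw [hA] at h
      linarith [h]
    · push_neg at hind
      obtain ⟨s, t, hst, hne⟩ := hind
      by_cases hs : s = 0
      · exfalso
        have ht := hne hs
        rw [hs] at hst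
        simp only [zero_smul, zero_add] at hst
        exact hw ((smul_eq_zero.mp hst).resolve_left ht)
      · have ht : t ≠ 0 := by
          intro h
          rw [h] at hst
          simp only [zero_smul, add_zero] at hst
          exact hu ((smul_eq_zero.mp hst).resolve_left hs)
        set c : ℝ := -(s / t) with hc
        have hc0 : c ≠ 0 := by
          simp only [hc, neg_ne_zero]
          exact div_ne_zero hs ht
        have hwc : w = c • u := by
          funext i
          have h0 := congrFun hst i
          simp only [Pi.add_apply, Pi.smul_apply, smul_eq_mul, Pi.zero_apply] at h0
          simp only [Pi.smul_apply, smul_eq_mul, hc]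
          field_simp
          linarith
        intro i
        rw [hwc, hsmulr, hhom c u hc0 hu]
        simp only [Pi.smul_apply, smul_eq_mul]
        rw [ha u i]
        ring
  refine ⟨fun j => a (Pi.single j 1) / 2, fun i j k => ?_⟩
  have hek : ∀ j : Fin n, (Pi.single j (1:ℝ) : Fin n → ℝ) ≠ 0 := by
    intro j h
    have := congrFun h j
    simp at this
  have hBe : B (Pi.single j 1) (Pi.single k 1) i = D i j k := by
    rw [hB]; simp only
    rw [Finset.sum_eq_single j]
    · rw [Finset.sum_eq_single k]
      · simp
      · intro k' _ hk'; simp [Pi.single_eq_of_ne hk']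
      · simp
    · intro j' _ hj'
      apply Finset.sum_eq_zero
      intro k' _
      simp [Pi.single_eq_of_ne hj']
    · simp
  have h2 := hclaim _ _ (hek j) (hek k) i
  rw [hBe] at h2
  rw [Pi.single_apply, Pi.single_apply] at h2
  split_ifs at h2 ⊢ <;> linarith
theorem projective_equivalence_iff_same_unparam_geodesics {n : ℕ}
    (Γ Γ' : (Fin n → ℝ) → Fin n → Fin n → Fin n → ℝ)
    (hΓ_smooth : ∀ i j k, ContDiff ℝ (⊤ : ℕ∞) (fun x => Γ x i j k))
    (hΓ'_smooth : ∀ i j k, ContDiff ℝ (⊤ : ℕ∞) (fun x => Γ' x i j k))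
    (hΓ_symm : ∀ x i j k, Γ x i j k = Γ x i k j)
    (hΓ'_symm : ∀ x i j k, Γ' x i j k = Γ' x i k j) :
    (∀ (γ : ℝ → (Fin n → ℝ)) (a b : ℝ), ContDiffOn ℝ 2 γ (Set.Ioo a b) →
        (∀ t ∈ Set.Ioo a b, deriv γ t ≠ 0) →
        (IsUnparamGeodOn Γ γ (Set.Ioo a b) ↔ IsUnparamGeodOn Γ' γ (Set.Ioo a b)))
      ↔ ∃ φ : (Fin n → ℝ) → Fin n → ℝ, ∀ x (i j k : Fin n),
          Γ' x i j k = Γ x i j k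
            + (if i = k then φ x j else 0) + (if i = j then φ x k else 0) := by
  constructor
  · intro H
    have key : ∀ x : Fin n → ℝ, ∃ φ : Fin n → ℝ, ∀ i j k, Γ' x i j k = Γ x i j k
        + (if i = k then φ j else 0) + (if i = j then φ k else 0) := by
      intro x
      have hD := bilin_prop (fun i j k => Γ' x i j k - Γ x i j k)
        (fun i j k => by rw [hΓ_symm x i j k, hΓ'_symm x i j k]) ?_
      · obtain ⟨φ, hφ⟩ := hD
        exact ⟨φ, fun i j k => by have := hφ i j k; linarith⟩
      intro v
      by_cases hv : v = 0
      · exact ⟨0, fun i => by simp [hv]⟩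
      · obtain ⟨γ, ε, hε, hγ0, hγ'0, hC2, hreg, hgeod⟩ := exists_geodesic Γ hΓ_smooth x v hv
        have hgeod' : IsUnparamGeodOn Γ' γ (Set.Ioo (-ε) ε) :=
          (H γ (-ε) ε hC2 hreg).mp hgeod
        have h0 : (0:ℝ) ∈ Set.Ioo (-ε) ε := ⟨by linarith, hε⟩
        obtain ⟨a₁, h₁⟩ := hgeod 0 h0
        obtain ⟨a₂, h₂⟩ := hgeod' 0 h0
        refine ⟨a₂ - a₁, fun i => ?_⟩
        have e1 := h₁ i
        have e2 := h₂ i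
        rw [hγ0, hγ'0] at e1 e2
        have hsub : ∑ j : Fin n, ∑ k : Fin n, (Γ' x i j k - Γ x i j k) * v j * v k
            = (∑ j : Fin n, ∑ k : Fin n, Γ' x i j k * v j * v k)
              - ∑ j : Fin n, ∑ k : Fin n, Γ x i j k * v j * v k := by
          rw [← Finset.sum_sub_distrib]
          refine Finset.sum_congr rfl fun j _ => ?_
          rw [← Finset.sum_sub_distrib]
          exact Finset.sum_congr rfl fun k _ => by ring
        rw [hsub]
        linarith
    choose φ hφ using key
    exact ⟨φ, fun x i j k => hφ x i j k⟩
  · rintro ⟨φ, hφ⟩ γ a b hC2 hreg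
    constructor
    · exact geod_shift Γ Γ' φ hφ γ _
    · refine geod_shift Γ' Γ (fun x => -φ x) (fun x i j k => ?_) γ _
      have := hφ x i j k
      simp only [Pi.neg_apply]
      split_ifs at this ⊢ <;> linarith
end

section
/- If η is a 1-form on a semi-Riemannian manifold generating a one-parameter group of projective transformations, so that η_{i,jk} + η_{j,ik} − (2/(n+1)) η^ℓ_{,ℓk} g_{ij} = λ_i g_{jk} + λ_j g_{ik} for some 1-form λ, then along any light-like geodesic γ the function t ↦ η(γ'(t)) satisfies d²/dt² η(γ'(t)) = 0, hence η(γ'(t)) = C₁ t + C₂ for constants C₁, C₂. -/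
/-!
STATEMENT 10: If a 1-form `η` on a semi-Riemannian manifold satisfies the projective-field
equation `η_{i,jk} + η_{j,ik} − (2/(n+1)) η^ℓ_{,ℓk} g_{ij} = λ_i g_{jk} + λ_j g_{ik}`, then
along every light-like geodesic `γ` the function `t ↦ η(γ'(t))` has vanishing second
derivative, hence equals `C₁ t + C₂`.

Coordinate model on `ℝⁿ`: metric `g x i j` (with pointwise inverse `ginv`), Christoffel
symbols `Γ x i j k` of its Levi-Civita connection (symmetric and metric-compatible), and
covariant derivatives of the covector `η` given by the usual coordinate formulas.
-/

/-- Partial derivative in the `i`-th coordinate direction. -/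
noncomputable def pd {n : ℕ} (i : Fin n) (f : (Fin n → ℝ) → ℝ) (x : Fin n → ℝ) : ℝ :=
  fderiv ℝ f x (Pi.single i 1)

/-- First covariant derivative `η_{i,j} = ∂_j η_i − Γ^s_{ji} η_s` of a covector field. -/
noncomputable def covD1 {n : ℕ} (Γ : (Fin n → ℝ) → Fin n → Fin n → Fin n → ℝ)
    (η : (Fin n → ℝ) → Fin n → ℝ) (i j : Fin n) (x : Fin n → ℝ) : ℝ :=
  pd j (fun y => η y i) x - ∑ s : Fin n, Γ x s j i * η x s

/-- Second covariant derivative `η_{i,jk}` of a covector field. -/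
noncomputable def covD2 {n : ℕ} (Γ : (Fin n → ℝ) → Fin n → Fin n → Fin n → ℝ)
    (η : (Fin n → ℝ) → Fin n → ℝ) (i j k : Fin n) (x : Fin n → ℝ) : ℝ :=
  pd k (fun y => covD1 Γ η i j y) x - ∑ s : Fin n, Γ x s k i * covD1 Γ η s j x
    - ∑ s : Fin n, Γ x s k j * covD1 Γ η i s x

open scoped ContDiff

lemma clm_expand {n : ℕ} (L : (Fin n → ℝ) →L[ℝ] ℝ) (v : Fin n → ℝ) :
    L v = ∑ k : Fin n, v k * L (Pi.single k 1) := by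
  have hv : v = ∑ k : Fin n, v k • (Pi.single k (1:ℝ) : Fin n → ℝ) := by
    funext j
    simp [Pi.single_apply, Finset.sum_ite_eq', mul_comm]
  conv_lhs => rw [hv]
  simp [smul_eq_mul]

lemma contDiff_pd {n : ℕ} {f : (Fin n → ℝ) → ℝ} (hf : ContDiff ℝ ∞ f) (j : Fin n) :
    ContDiff ℝ ∞ (pd j f) := by
  have h := (contDiff_infty_iff_fderiv.mp hf).2
  exact (ContinuousLinearMap.apply ℝ ℝ (Pi.single j 1)).contDiff.comp h

lemma hasDerivAt_comp_curve {n : ℕ} {F : (Fin n → ℝ) → ℝ} (hF : ContDiff ℝ ∞ F)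
    {γ : ℝ → (Fin n → ℝ)} (hγ : ContDiff ℝ ∞ γ) (t : ℝ) :
    HasDerivAt (fun s => F (γ s)) (∑ k : Fin n, pd k F (γ t) * deriv γ t k) t := by
  have hγd : HasDerivAt γ (deriv γ t) t :=
    ((hγ.differentiable (by simp)) t).hasDerivAt
  have hFd : HasFDerivAt F (fderiv ℝ F (γ t)) (γ t) :=
    ((hF.differentiable (by simp)) (γ t)).hasFDerivAt
  have h := hFd.comp_hasDerivAt t hγd
  have e : fderiv ℝ F (γ t) (deriv γ t) = ∑ k : Fin n, pd k F (γ t) * deriv γ t k := by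
    rw [clm_expand]
    exact Finset.sum_congr rfl fun k _ => by rw [mul_comm]; rfl
  rwa [e] at h

lemma contDiff_det {n : ℕ} (M : (Fin n → ℝ) → Matrix (Fin n) (Fin n) ℝ)
    (h : ∀ i j, ContDiff ℝ ∞ fun x => M x i j) :
    ContDiff ℝ ∞ (fun x => (M x).det) := by
  have e : (fun x => (M x).det)
      = fun x => ∑ σ : Equiv.Perm (Fin n), (Equiv.Perm.sign σ : ℝ) * ∏ i, M x (σ i) i := by
    funext x; rw [Matrix.det_apply]
    apply Finset.sum_congr rfl; intro σ _; rw [Units.smul_def, zsmul_eq_mul]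
  rw [e]
  exact ContDiff.sum fun σ _ => contDiff_const.mul (contDiff_prod fun i _ => h (σ i) i)

lemma contDiff_ginv {n : ℕ} (g ginv : (Fin n → ℝ) → Fin n → Fin n → ℝ)
    (hg_smooth : ∀ i j, ContDiff ℝ ∞ (fun x => g x i j))
    (hginv : ∀ x i j, ∑ s : Fin n, g x i s * ginv x s j = if i = j then 1 else 0) :
    ∀ i j, ContDiff ℝ ∞ (fun x => ginv x i j) := by
  set G : (Fin n → ℝ) → Matrix (Fin n) (Fin n) ℝ := fun x => Matrix.of fun i j => g x i j with hG
  have hGH : ∀ x, G x * (Matrix.of fun i j => ginv x i j) = 1 := by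
    intro x
    ext i j
    simpa [hG, Matrix.mul_apply, Matrix.one_apply] using hginv x i j
  have hdet_ne : ∀ x, (G x).det ≠ 0 := by
    intro x
    have h2 := congrArg Matrix.det (hGH x)
    rw [Matrix.det_mul, Matrix.det_one] at h2
    intro h0; rw [h0, zero_mul] at h2; exact zero_ne_one h2
  have hinv_eq : ∀ x i j, ginv x i j
      = ((G x).det)⁻¹ * ((G x).updateRow j (Pi.single i 1)).det := by
    intro x i j
    have h1 : (G x)⁻¹ = Matrix.of fun i j => ginv x i j := Matrix.inv_eq_right_inv (hGH x)
    have h2 := congrFun (congrFun h1 i) j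
    rw [Matrix.inv_def] at h2
    simp only [Matrix.smul_apply, Matrix.adjugate_apply, smul_eq_mul, Matrix.of_apply,
      Ring.inverse_eq_inv] at h2
    exact h2.symm
  intro i j
  have hd : ContDiff ℝ ∞ (fun x => (G x).det) := contDiff_det G (fun a b => hg_smooth a b)
  have hu : ContDiff ℝ ∞ (fun x => ((G x).updateRow j (Pi.single i 1)).det) := by
    apply contDiff_det
    intro a b
    by_cases hab : a = j
    · simp only [Matrix.updateRow_apply, if_pos hab]; exact contDiff_const
    · simp only [Matrix.updateRow_apply, if_neg hab]; exact hg_smooth a b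
  have e : (fun x => ginv x i j)
      = fun x => ((G x).det)⁻¹ * ((G x).updateRow j (Pi.single i 1)).det := by
    funext x; exact hinv_eq x i j
  rw [e]
  exact (hd.inv hdet_ne).mul hu

-- left inverse from right inverse
lemma ginv_left {n : ℕ} (g ginv : (Fin n → ℝ) → Fin n → Fin n → ℝ)
    (hginv : ∀ x i j, ∑ s : Fin n, g x i s * ginv x s j = if i = j then 1 else 0) :
    ∀ x i j, ∑ s : Fin n, ginv x i s * g x s j = if i = j then 1 else 0 := by
  intro x i j
  have hGH : (Matrix.of fun i j => g x i j) * (Matrix.of fun i j => ginv x i j) = 1 := by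
    ext a b
    simpa [Matrix.mul_apply, Matrix.one_apply] using hginv x a b
  have hHG := mul_eq_one_comm.mp hGH
  have := congrFun (congrFun hHG i) j
  simpa [Matrix.mul_apply, Matrix.one_apply] using this

theorem projective_field_linear_along_lightlike_geodesics {n : ℕ}
    (g ginv : (Fin n → ℝ) → Fin n → Fin n → ℝ)
    (Γ : (Fin n → ℝ) → Fin n → Fin n → Fin n → ℝ)
    (η lam : (Fin n → ℝ) → Fin n → ℝ)
    (hg_smooth : ∀ i j, ContDiff ℝ (⊤ : ℕ∞) (fun x => g x i j))
    (hη_smooth : ∀ i, ContDiff ℝ (⊤ : ℕ∞) (fun x => η x i))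
    (hg_symm : ∀ x i j, g x i j = g x j i)
    (hginv : ∀ x i j, ∑ s : Fin n, g x i s * ginv x s j = if i = j then 1 else 0)
    (hΓ_symm : ∀ x i j k, Γ x i j k = Γ x i k j)
    (hcompat : ∀ x i j k, pd k (fun y => g y i j) x
      = ∑ s : Fin n, Γ x s k i * g x s j + ∑ s : Fin n, Γ x s k j * g x i s)
    -- the projective-field equation for η:
    (hproj : ∀ x i j k,
      covD2 Γ η i j k x + covD2 Γ η j i k x
        - (2 / (n + 1 : ℝ)) * (∑ l : Fin n, ∑ m : Fin n, ginv x l m * covD2 Γ η m l k x)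
            * g x i j
      = lam x i * g x j k + lam x j * g x i k)
    (γ : ℝ → (Fin n → ℝ)) (hγ : ContDiff ℝ (⊤ : ℕ∞) γ)
    (hgeod : ∀ (t : ℝ) (i : Fin n),
      deriv (fun s => deriv γ s i) t
        + ∑ j : Fin n, ∑ k : Fin n, Γ (γ t) i j k * deriv γ t j * deriv γ t k = 0)
    (hlight : ∀ t : ℝ, ∑ i : Fin n, ∑ j : Fin n, g (γ t) i j * deriv γ t i * deriv γ t j = 0) :
    (∀ t : ℝ,
      deriv (deriv (fun s => ∑ i : Fin n, η (γ s) i * deriv γ s i)) t = 0) ∧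
    ∃ C₁ C₂ : ℝ, ∀ t : ℝ, (∑ i : Fin n, η (γ t) i * deriv γ t i) = C₁ * t + C₂ := by
  -- downgrade smoothness
  have hg : ∀ i j, ContDiff ℝ ∞ (fun x => g x i j) := fun i j => (hg_smooth i j).of_le (by simp)
  have hη : ∀ i, ContDiff ℝ ∞ (fun x => η x i) := fun i => (hη_smooth i).of_le (by simp)
  have hγ' : ContDiff ℝ ∞ γ := hγ.of_le (by simp)
  have hgi : ∀ i j, ContDiff ℝ ∞ (fun x => ginv x i j) := contDiff_ginv g ginv hg hginv
  -- Christoffel symbols are smooth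
  have hΓform : ∀ (x : Fin n → ℝ) (m k i : Fin n), Γ x m k i
      = ∑ j : Fin n, ginv x m j * ((1/2) * (pd k (fun y => g y j i) x
          + pd i (fun y => g y j k) x - pd j (fun y => g y k i) x)) := by
    have hA : ∀ (x : Fin n → ℝ) (a b c : Fin n),
        ∑ s : Fin n, Γ x s b c * g x s a
          = (1/2) * (pd b (fun y => g y a c) x + pd c (fun y => g y a b) x
              - pd a (fun y => g y b c) x) := by
      intro x a b c
      have e1 := hcompat x a c b
      have e2 := hcompat x a b c
      have e3 := hcompat x b c a
      have r1 : ∑ s : Fin n, Γ x s b a * g x s c = ∑ s : Fin n, Γ x s a b * g x s c :=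
        Finset.sum_congr rfl fun s _ => by rw [hΓ_symm]
      have r2 : ∑ s : Fin n, Γ x s b c * g x a s = ∑ s : Fin n, Γ x s b c * g x s a :=
        Finset.sum_congr rfl fun s _ => by rw [hg_symm]
      have r3 : ∑ s : Fin n, Γ x s c b * g x a s = ∑ s : Fin n, Γ x s b c * g x s a :=
        Finset.sum_congr rfl fun s _ => by rw [hg_symm, hΓ_symm]
      have r4 : ∑ s : Fin n, Γ x s c a * g x s b = ∑ s : Fin n, Γ x s a c * g x b s :=
        Finset.sum_congr rfl fun s _ => by rw [hg_symm, hΓ_symm]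
      linarith
    intro x m k i
    have key : ∀ s : Fin n, ∑ j : Fin n, ginv x m j * g x s j = if m = s then 1 else 0 := by
      intro s
      have := ginv_left g ginv hginv x m s
      rw [← this]
      exact Finset.sum_congr rfl fun j _ => by rw [hg_symm]
    calc Γ x m k i = ∑ s : Fin n, Γ x s k i * (if m = s then 1 else 0) := by
          simp [Finset.sum_ite_eq]
      _ = ∑ s : Fin n, Γ x s k i * ∑ j : Fin n, ginv x m j * g x s j := by
          exact Finset.sum_congr rfl fun s _ => by rw [key s]
      _ = ∑ s : Fin n, ∑ j : Fin n, ginv x m j * (Γ x s k i * g x s j) := by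
          refine Finset.sum_congr rfl fun s _ => ?_
          rw [Finset.mul_sum]
          exact Finset.sum_congr rfl fun j _ => by ring
      _ = ∑ j : Fin n, ∑ s : Fin n, ginv x m j * (Γ x s k i * g x s j) := Finset.sum_comm
      _ = ∑ j : Fin n, ginv x m j * ∑ s : Fin n, Γ x s k i * g x s j := by
          exact Finset.sum_congr rfl fun j _ => (Finset.mul_sum _ _ _).symm
      _ = ∑ j : Fin n, ginv x m j * ((1/2) * (pd k (fun y => g y j i) x
          + pd i (fun y => g y j k) x - pd j (fun y => g y k i) x)) := by
          exact Finset.sum_congr rfl fun j _ => by rw [hA x j k i]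
  have hΓs : ∀ m k i, ContDiff ℝ ∞ (fun x => Γ x m k i) := by
    intro m k i
    have e : (fun x => Γ x m k i) = fun x => ∑ j : Fin n, ginv x m j
        * ((1/2) * (pd k (fun y => g y j i) x
          + pd i (fun y => g y j k) x - pd j (fun y => g y k i) x)) := by
      funext x; exact hΓform x m k i
    rw [e]
    exact ContDiff.sum fun j _ => (hgi m j).mul
      ((contDiff_const).mul (((contDiff_pd (hg j i) k).add (contDiff_pd (hg j k) i)).sub
        (contDiff_pd (hg k i) j)))
  have hcd1 : ∀ i j, ContDiff ℝ ∞ (covD1 Γ η i j) := by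
    intro i j
    have : covD1 Γ η i j = fun x => pd j (fun y => η y i) x - ∑ s : Fin n, Γ x s j i * η x s :=
      rfl
    rw [this]
    exact (contDiff_pd (hη i) j).sub (ContDiff.sum fun s _ => (hΓs s j i).mul (hη s))
  -- velocity components
  have hw : ContDiff ℝ ∞ (deriv γ) := (contDiff_infty_iff_deriv.mp hγ').2
  have hwi : ∀ i, ContDiff ℝ ∞ (fun t => deriv γ t i) := fun i =>
    (ContinuousLinearMap.proj (R := ℝ) (φ := fun _ : Fin n => ℝ) i).contDiff.comp hw
  have hwd : ∀ (t : ℝ) (i : Fin n),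
      HasDerivAt (fun s => deriv γ s i) (deriv (fun s => deriv γ s i) t) t := fun t i =>
    (((hwi i).differentiable (by simp)) t).hasDerivAt
  -- geodesic equation as a formula for second derivatives
  have hgeod' : ∀ (t : ℝ) (i : Fin n), deriv (fun s => deriv γ s i) t
      = -∑ j : Fin n, ∑ k : Fin n, Γ (γ t) i j k * deriv γ t j * deriv γ t k := by
    intro t i
    have := hgeod t i
    linarith
  -- first derivative of f
  set f : ℝ → ℝ := fun s => ∑ i : Fin n, η (γ s) i * deriv γ s i with hf_def
  set F1 : ℝ → ℝ := fun t => ∑ i : Fin n, ∑ j : Fin n,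
      covD1 Γ η i j (γ t) * deriv γ t i * deriv γ t j with hF1_def
  have hf1 : ∀ t, HasDerivAt f (F1 t) t := by
    intro t
    have hterm : ∀ i : Fin n, HasDerivAt (fun s => η (γ s) i * deriv γ s i)
        ((∑ k : Fin n, pd k (fun y => η y i) (γ t) * deriv γ t k) * deriv γ t i
          + η (γ t) i * deriv (fun s => deriv γ s i) t) t := fun i =>
      (hasDerivAt_comp_curve (hη i) hγ' t).mul (hwd t i)
    have hsum := HasDerivAt.sum (fun i (_ : i ∈ Finset.univ) => hterm i)
    have heq : ∑ i : Fin n,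
        ((∑ k : Fin n, pd k (fun y => η y i) (γ t) * deriv γ t k) * deriv γ t i
          + η (γ t) i * deriv (fun s => deriv γ s i) t) = F1 t := by
      show _ = ∑ i : Fin n, ∑ j : Fin n, covD1 Γ η i j (γ t) * deriv γ t i * deriv γ t j
      have expand : ∀ i : Fin n,
          (∑ k : Fin n, pd k (fun y => η y i) (γ t) * deriv γ t k) * deriv γ t i
            + η (γ t) i * deriv (fun s => deriv γ s i) t
          = ∑ j : Fin n, pd j (fun y => η y i) (γ t) * deriv γ t i * deriv γ t j
            - ∑ j : Fin n, ∑ k : Fin n,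
                Γ (γ t) i j k * η (γ t) i * deriv γ t j * deriv γ t k := by
        intro i
        rw [hgeod' t i, mul_neg, Finset.mul_sum, Finset.sum_mul, ← sub_eq_add_neg]
        congr 1
        · exact Finset.sum_congr rfl fun j _ => by ring
        · refine Finset.sum_congr rfl fun j _ => ?_
          rw [Finset.mul_sum]
          exact Finset.sum_congr rfl fun k _ => by ring
      rw [Finset.sum_congr rfl fun i _ => expand i, Finset.sum_sub_distrib]
      -- now compare with expansion of covD1
      have rhs_expand : ∑ i : Fin n, ∑ j : Fin n,
            covD1 Γ η i j (γ t) * deriv γ t i * deriv γ t j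
          = ∑ i : Fin n, ∑ j : Fin n,
              pd j (fun y => η y i) (γ t) * deriv γ t i * deriv γ t j
            - ∑ i : Fin n, ∑ j : Fin n, ∑ s : Fin n,
                Γ (γ t) s j i * η (γ t) s * deriv γ t i * deriv γ t j := by
        rw [← Finset.sum_sub_distrib]
        refine Finset.sum_congr rfl fun i _ => ?_
        rw [← Finset.sum_sub_distrib]
        refine Finset.sum_congr rfl fun j _ => ?_
        show (pd j (fun y => η y i) (γ t) - ∑ s : Fin n, Γ (γ t) s j i * η (γ t) s)
              * deriv γ t i * deriv γ t j = _
        rw [sub_mul, sub_mul, Finset.sum_mul, Finset.sum_mul]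
      rw [rhs_expand]
      congr 1
      -- the Γ-sums agree after relabelling
      calc ∑ i : Fin n, ∑ j : Fin n, ∑ k : Fin n,
            Γ (γ t) i j k * η (γ t) i * deriv γ t j * deriv γ t k
          = ∑ j : Fin n, ∑ i : Fin n, ∑ k : Fin n,
            Γ (γ t) i j k * η (γ t) i * deriv γ t j * deriv γ t k := Finset.sum_comm
        _ = ∑ i : Fin n, ∑ j : Fin n, ∑ s : Fin n,
            Γ (γ t) s j i * η (γ t) s * deriv γ t i * deriv γ t j := by
            refine Finset.sum_congr rfl fun a _ => ?_
            rw [Finset.sum_comm]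
            refine Finset.sum_congr rfl fun b _ => ?_
            exact Finset.sum_congr rfl fun c _ => by rw [hΓ_symm (γ t) c a b]
    rw [← heq]
    exact hsum.congr_of_eventuallyEq
      (Filter.Eventually.of_forall fun s => by simp only [Finset.sum_apply, f])
  -- second derivative of f
  set S : ℝ → ℝ := fun t => ∑ i : Fin n, ∑ j : Fin n, ∑ k : Fin n,
      covD2 Γ η i j k (γ t) * deriv γ t i * deriv γ t j * deriv γ t k with hS_def
  have hf2 : ∀ t, HasDerivAt F1 (S t) t := by
    intro t
    have hterm : ∀ i j : Fin n, HasDerivAt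
        (fun s => covD1 Γ η i j (γ s) * deriv γ s i * deriv γ s j)
        (((∑ k : Fin n, pd k (covD1 Γ η i j) (γ t) * deriv γ t k) * deriv γ t i
            + covD1 Γ η i j (γ t) * deriv (fun s => deriv γ s i) t) * deriv γ t j
          + covD1 Γ η i j (γ t) * deriv γ t i * deriv (fun s => deriv γ s j) t) t := fun i j =>
      ((hasDerivAt_comp_curve (hcd1 i j) hγ' t).mul (hwd t i)).mul (hwd t j)
    have hsum := HasDerivAt.sum (fun i (_ : i ∈ (Finset.univ : Finset (Fin n))) =>
      HasDerivAt.sum (fun j (_ : j ∈ (Finset.univ : Finset (Fin n))) => hterm i j))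
    -- abbreviations (only in comments): P i j = covD1 .. (γ t), w = deriv γ t,
    -- Q i j k = pd k (covD1 ..) (γ t), E i = ∑ a ∑ b Γ i a b w a w b
    have hD : ∑ i : Fin n, ∑ j : Fin n,
        (((∑ k : Fin n, pd k (covD1 Γ η i j) (γ t) * deriv γ t k) * deriv γ t i
            + covD1 Γ η i j (γ t) * deriv (fun s => deriv γ s i) t) * deriv γ t j
          + covD1 Γ η i j (γ t) * deriv γ t i * deriv (fun s => deriv γ s j) t)
        = (∑ i : Fin n, ∑ j : Fin n, ∑ k : Fin n,
            pd k (covD1 Γ η i j) (γ t) * deriv γ t i * deriv γ t j * deriv γ t k)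
          - (∑ i : Fin n, ∑ j : Fin n, (covD1 Γ η i j (γ t)
              * (∑ a : Fin n, ∑ b : Fin n, Γ (γ t) i a b * deriv γ t a * deriv γ t b))
              * deriv γ t j)
          - (∑ i : Fin n, ∑ j : Fin n, covD1 Γ η i j (γ t) * deriv γ t i
              * (∑ a : Fin n, ∑ b : Fin n, Γ (γ t) j a b * deriv γ t a * deriv γ t b)) := by
      have step1 : ∀ i j : Fin n,
          (((∑ k : Fin n, pd k (covD1 Γ η i j) (γ t) * deriv γ t k) * deriv γ t i
              + covD1 Γ η i j (γ t) * deriv (fun s => deriv γ s i) t) * deriv γ t j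
            + covD1 Γ η i j (γ t) * deriv γ t i * deriv (fun s => deriv γ s j) t)
          = (∑ k : Fin n, pd k (covD1 Γ η i j) (γ t) * deriv γ t k)
              * deriv γ t i * deriv γ t j
            - (covD1 Γ η i j (γ t)
                * (∑ a : Fin n, ∑ b : Fin n, Γ (γ t) i a b * deriv γ t a * deriv γ t b))
                * deriv γ t j
            - covD1 Γ η i j (γ t) * deriv γ t i
                * (∑ a : Fin n, ∑ b : Fin n, Γ (γ t) j a b * deriv γ t a * deriv γ t b) := by
        intro i j
        rw [hgeod' t i, hgeod' t j]
        ring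
      rw [Finset.sum_congr rfl fun i _ => Finset.sum_congr rfl fun j _ => step1 i j]
      simp only [Finset.sum_sub_distrib]
      congr 1
      congr 1
      refine Finset.sum_congr rfl fun i _ => Finset.sum_congr rfl fun j _ => ?_
      rw [Finset.sum_mul, Finset.sum_mul]
      exact Finset.sum_congr rfl fun k _ => by ring
    have hA2 : ∑ i : Fin n, ∑ j : Fin n, ∑ k : Fin n,
          (∑ s : Fin n, Γ (γ t) s k i * covD1 Γ η s j (γ t))
            * deriv γ t i * deriv γ t j * deriv γ t k
        = ∑ i : Fin n, ∑ j : Fin n, (covD1 Γ η i j (γ t)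
            * (∑ a : Fin n, ∑ b : Fin n, Γ (γ t) i a b * deriv γ t a * deriv γ t b))
            * deriv γ t j := by
      calc ∑ i : Fin n, ∑ j : Fin n, ∑ k : Fin n,
            (∑ s : Fin n, Γ (γ t) s k i * covD1 Γ η s j (γ t))
              * deriv γ t i * deriv γ t j * deriv γ t k
          = ∑ i : Fin n, ∑ j : Fin n, ∑ k : Fin n, ∑ s : Fin n,
              Γ (γ t) s k i * covD1 Γ η s j (γ t)
                * deriv γ t i * deriv γ t j * deriv γ t k := by
            refine Finset.sum_congr rfl fun i _ => Finset.sum_congr rfl fun j _ =>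
              Finset.sum_congr rfl fun k _ => ?_
            rw [Finset.sum_mul, Finset.sum_mul, Finset.sum_mul]
        _ = ∑ i : Fin n, ∑ j : Fin n, ∑ s : Fin n, ∑ k : Fin n,
              Γ (γ t) s k i * covD1 Γ η s j (γ t)
                * deriv γ t i * deriv γ t j * deriv γ t k := by
            exact Finset.sum_congr rfl fun i _ => Finset.sum_congr rfl fun j _ =>
              Finset.sum_comm
        _ = ∑ i : Fin n, ∑ s : Fin n, ∑ j : Fin n, ∑ k : Fin n,
              Γ (γ t) s k i * covD1 Γ η s j (γ t)
                * deriv γ t i * deriv γ t j * deriv γ t k := by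
            exact Finset.sum_congr rfl fun i _ => Finset.sum_comm
        _ = ∑ s : Fin n, ∑ i : Fin n, ∑ j : Fin n, ∑ k : Fin n,
              Γ (γ t) s k i * covD1 Γ η s j (γ t)
                * deriv γ t i * deriv γ t j * deriv γ t k := Finset.sum_comm
        _ = ∑ s : Fin n, ∑ j : Fin n, ∑ i : Fin n, ∑ k : Fin n,
              Γ (γ t) s k i * covD1 Γ η s j (γ t)
                * deriv γ t i * deriv γ t j * deriv γ t k := by
            exact Finset.sum_congr rfl fun s _ => Finset.sum_comm
        _ = ∑ s : Fin n, ∑ j : Fin n, ∑ i : Fin n, ∑ k : Fin n,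
              covD1 Γ η s j (γ t) * (Γ (γ t) s i k * deriv γ t i * deriv γ t k)
                * deriv γ t j := by
            refine Finset.sum_congr rfl fun s _ => Finset.sum_congr rfl fun j _ =>
              Finset.sum_congr rfl fun i _ => Finset.sum_congr rfl fun k _ => ?_
            rw [hΓ_symm (γ t) s k i]
            ring
        _ = ∑ i : Fin n, ∑ j : Fin n, (covD1 Γ η i j (γ t)
            * (∑ a : Fin n, ∑ b : Fin n, Γ (γ t) i a b * deriv γ t a * deriv γ t b))
            * deriv γ t j := by
            refine Finset.sum_congr rfl fun i _ => Finset.sum_congr rfl fun j _ => ?_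
            rw [Finset.mul_sum, Finset.sum_mul]
            refine Finset.sum_congr rfl fun a _ => ?_
            rw [Finset.mul_sum, Finset.sum_mul]
    have hA3 : ∑ i : Fin n, ∑ j : Fin n, ∑ k : Fin n,
          (∑ s : Fin n, Γ (γ t) s k j * covD1 Γ η i s (γ t))
            * deriv γ t i * deriv γ t j * deriv γ t k
        = ∑ i : Fin n, ∑ j : Fin n, covD1 Γ η i j (γ t) * deriv γ t i
            * (∑ a : Fin n, ∑ b : Fin n, Γ (γ t) j a b * deriv γ t a * deriv γ t b) := by
      calc ∑ i : Fin n, ∑ j : Fin n, ∑ k : Fin n,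
            (∑ s : Fin n, Γ (γ t) s k j * covD1 Γ η i s (γ t))
              * deriv γ t i * deriv γ t j * deriv γ t k
          = ∑ i : Fin n, ∑ j : Fin n, ∑ k : Fin n, ∑ s : Fin n,
              Γ (γ t) s k j * covD1 Γ η i s (γ t)
                * deriv γ t i * deriv γ t j * deriv γ t k := by
            refine Finset.sum_congr rfl fun i _ => Finset.sum_congr rfl fun j _ =>
              Finset.sum_congr rfl fun k _ => ?_
            rw [Finset.sum_mul, Finset.sum_mul, Finset.sum_mul]
        _ = ∑ i : Fin n, ∑ j : Fin n, ∑ s : Fin n, ∑ k : Fin n,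
              Γ (γ t) s k j * covD1 Γ η i s (γ t)
                * deriv γ t i * deriv γ t j * deriv γ t k := by
            exact Finset.sum_congr rfl fun i _ => Finset.sum_congr rfl fun j _ =>
              Finset.sum_comm
        _ = ∑ i : Fin n, ∑ s : Fin n, ∑ j : Fin n, ∑ k : Fin n,
              Γ (γ t) s k j * covD1 Γ η i s (γ t)
                * deriv γ t i * deriv γ t j * deriv γ t k := by
            exact Finset.sum_congr rfl fun i _ => Finset.sum_comm
        _ = ∑ i : Fin n, ∑ s : Fin n, ∑ j : Fin n, ∑ k : Fin n,
              covD1 Γ η i s (γ t) * deriv γ t i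
                * (Γ (γ t) s j k * deriv γ t j * deriv γ t k) := by
            refine Finset.sum_congr rfl fun i _ => Finset.sum_congr rfl fun sv _ =>
              Finset.sum_congr rfl fun j _ => Finset.sum_congr rfl fun k _ => ?_
            rw [hΓ_symm (γ t) sv k j]
            ring
        _ = ∑ i : Fin n, ∑ j : Fin n, covD1 Γ η i j (γ t) * deriv γ t i
            * (∑ a : Fin n, ∑ b : Fin n, Γ (γ t) j a b * deriv γ t a * deriv γ t b) := by
            refine Finset.sum_congr rfl fun i _ => Finset.sum_congr rfl fun j _ => ?_
            rw [Finset.mul_sum]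
            refine Finset.sum_congr rfl fun a _ => ?_
            rw [Finset.mul_sum]
    have hS : S t
        = (∑ i : Fin n, ∑ j : Fin n, ∑ k : Fin n,
            pd k (covD1 Γ η i j) (γ t) * deriv γ t i * deriv γ t j * deriv γ t k)
          - (∑ i : Fin n, ∑ j : Fin n, ∑ k : Fin n,
              (∑ s : Fin n, Γ (γ t) s k i * covD1 Γ η s j (γ t))
                * deriv γ t i * deriv γ t j * deriv γ t k)
          - (∑ i : Fin n, ∑ j : Fin n, ∑ k : Fin n,
              (∑ s : Fin n, Γ (γ t) s k j * covD1 Γ η i s (γ t))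
                * deriv γ t i * deriv γ t j * deriv γ t k) := by
      rw [hS_def]
      simp only [← Finset.sum_sub_distrib]
      refine Finset.sum_congr rfl fun i _ => Finset.sum_congr rfl fun j _ =>
        Finset.sum_congr rfl fun k _ => ?_
      have : covD2 Γ η i j k (γ t)
          = pd k (covD1 Γ η i j) (γ t)
            - ∑ s : Fin n, Γ (γ t) s k i * covD1 Γ η s j (γ t)
            - ∑ s : Fin n, Γ (γ t) s k j * covD1 Γ η i s (γ t) := rfl
      rw [this]
      ring
    have heq : ∑ i : Fin n, ∑ j : Fin n,
        (((∑ k : Fin n, pd k (covD1 Γ η i j) (γ t) * deriv γ t k) * deriv γ t i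
            + covD1 Γ η i j (γ t) * deriv (fun s => deriv γ s i) t) * deriv γ t j
          + covD1 Γ η i j (γ t) * deriv γ t i * deriv (fun s => deriv γ s j) t)
        = S t := by
      rw [hD, hS, hA2, hA3]
    rw [← heq]
    exact hsum.congr_of_eventuallyEq
      (Filter.Eventually.of_forall fun s => by simp only [Finset.sum_apply, F1])
  -- S vanishes
  have hS0 : ∀ t, S t = 0 := by
    intro t
    have main : ∑ i : Fin n, ∑ j : Fin n, ∑ k : Fin n,
        ((covD2 Γ η i j k (γ t) + covD2 Γ η j i k (γ t)
          - (2 / (n + 1 : ℝ) * ∑ l : Fin n, ∑ m : Fin n,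
              ginv (γ t) l m * covD2 Γ η m l k (γ t)) * g (γ t) i j)
          * (deriv γ t i * deriv γ t j * deriv γ t k))
        = ∑ i : Fin n, ∑ j : Fin n, ∑ k : Fin n,
          ((lam (γ t) i * g (γ t) j k + lam (γ t) j * g (γ t) i k)
            * (deriv γ t i * deriv γ t j * deriv γ t k)) := by
      refine Finset.sum_congr rfl fun i _ => Finset.sum_congr rfl fun j _ =>
        Finset.sum_congr rfl fun k _ => ?_
      rw [hproj (γ t) i j k]
    have split : ∑ i : Fin n, ∑ j : Fin n, ∑ k : Fin n,
        ((covD2 Γ η i j k (γ t) + covD2 Γ η j i k (γ t)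
          - (2 / (n + 1 : ℝ) * ∑ l : Fin n, ∑ m : Fin n,
              ginv (γ t) l m * covD2 Γ η m l k (γ t)) * g (γ t) i j)
          * (deriv γ t i * deriv γ t j * deriv γ t k))
        = (∑ i : Fin n, ∑ j : Fin n, ∑ k : Fin n,
            covD2 Γ η i j k (γ t) * (deriv γ t i * deriv γ t j * deriv γ t k))
          + (∑ i : Fin n, ∑ j : Fin n, ∑ k : Fin n,
            covD2 Γ η j i k (γ t) * (deriv γ t i * deriv γ t j * deriv γ t k))
          - (∑ i : Fin n, ∑ j : Fin n, ∑ k : Fin n,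
            ((2 / (n + 1 : ℝ) * ∑ l : Fin n, ∑ m : Fin n,
              ginv (γ t) l m * covD2 Γ η m l k (γ t)) * g (γ t) i j)
              * (deriv γ t i * deriv γ t j * deriv γ t k)) := by
      simp only [add_mul, sub_mul, Finset.sum_add_distrib, Finset.sum_sub_distrib]
    have splitR : ∑ i : Fin n, ∑ j : Fin n, ∑ k : Fin n,
          ((lam (γ t) i * g (γ t) j k + lam (γ t) j * g (γ t) i k)
            * (deriv γ t i * deriv γ t j * deriv γ t k))
        = (∑ i : Fin n, ∑ j : Fin n, ∑ k : Fin n,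
            (lam (γ t) i * g (γ t) j k) * (deriv γ t i * deriv γ t j * deriv γ t k))
          + (∑ i : Fin n, ∑ j : Fin n, ∑ k : Fin n,
            (lam (γ t) j * g (γ t) i k) * (deriv γ t i * deriv γ t j * deriv γ t k)) := by
      simp only [add_mul, Finset.sum_add_distrib]
    have hL1 : ∑ i : Fin n, ∑ j : Fin n, ∑ k : Fin n,
        covD2 Γ η i j k (γ t) * (deriv γ t i * deriv γ t j * deriv γ t k) = S t := by
      rw [hS_def]
      exact Finset.sum_congr rfl fun i _ => Finset.sum_congr rfl fun j _ =>
        Finset.sum_congr rfl fun k _ => by ring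
    have hL2 : ∑ i : Fin n, ∑ j : Fin n, ∑ k : Fin n,
        covD2 Γ η j i k (γ t) * (deriv γ t i * deriv γ t j * deriv γ t k) = S t := by
      rw [hS_def]
      rw [Finset.sum_comm]
      exact Finset.sum_congr rfl fun i _ => Finset.sum_congr rfl fun j _ =>
        Finset.sum_congr rfl fun k _ => by ring
    have hL3 : ∑ i : Fin n, ∑ j : Fin n, ∑ k : Fin n,
        ((2 / (n + 1 : ℝ) * ∑ l : Fin n, ∑ m : Fin n,
          ginv (γ t) l m * covD2 Γ η m l k (γ t)) * g (γ t) i j)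
          * (deriv γ t i * deriv γ t j * deriv γ t k) = 0 := by
      have reorder : ∑ i : Fin n, ∑ j : Fin n, ∑ k : Fin n,
          ((2 / (n + 1 : ℝ) * ∑ l : Fin n, ∑ m : Fin n,
            ginv (γ t) l m * covD2 Γ η m l k (γ t)) * g (γ t) i j)
            * (deriv γ t i * deriv γ t j * deriv γ t k)
          = ∑ k : Fin n, ∑ i : Fin n, ∑ j : Fin n,
          ((2 / (n + 1 : ℝ) * ∑ l : Fin n, ∑ m : Fin n,
            ginv (γ t) l m * covD2 Γ η m l k (γ t)) * g (γ t) i j)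
            * (deriv γ t i * deriv γ t j * deriv γ t k) := by
        calc ∑ i : Fin n, ∑ j : Fin n, ∑ k : Fin n,
              ((2 / (n + 1 : ℝ) * ∑ l : Fin n, ∑ m : Fin n,
                ginv (γ t) l m * covD2 Γ η m l k (γ t)) * g (γ t) i j)
                * (deriv γ t i * deriv γ t j * deriv γ t k)
            = ∑ i : Fin n, ∑ k : Fin n, ∑ j : Fin n,
              ((2 / (n + 1 : ℝ) * ∑ l : Fin n, ∑ m : Fin n,
                ginv (γ t) l m * covD2 Γ η m l k (γ t)) * g (γ t) i j)
                * (deriv γ t i * deriv γ t j * deriv γ t k) :=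
              Finset.sum_congr rfl fun i _ => Finset.sum_comm
          _ = ∑ k : Fin n, ∑ i : Fin n, ∑ j : Fin n,
              ((2 / (n + 1 : ℝ) * ∑ l : Fin n, ∑ m : Fin n,
                ginv (γ t) l m * covD2 Γ η m l k (γ t)) * g (γ t) i j)
                * (deriv γ t i * deriv γ t j * deriv γ t k) := Finset.sum_comm
      rw [reorder]
      refine Finset.sum_eq_zero fun k _ => ?_
      have gen : ∀ c : ℝ, ∑ i : Fin n, ∑ j : Fin n,
          (c * g (γ t) i j) * (deriv γ t i * deriv γ t j * deriv γ t k)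
          = (c * deriv γ t k)
            * ∑ i : Fin n, ∑ j : Fin n, g (γ t) i j * deriv γ t i * deriv γ t j := by
        intro c
        rw [Finset.mul_sum]
        refine Finset.sum_congr rfl fun i _ => ?_
        rw [Finset.mul_sum]
        exact Finset.sum_congr rfl fun j _ => by ring
      rw [gen, hlight t, mul_zero]
    have hR1 : ∑ i : Fin n, ∑ j : Fin n, ∑ k : Fin n,
        (lam (γ t) i * g (γ t) j k) * (deriv γ t i * deriv γ t j * deriv γ t k) = 0 := by
      refine Finset.sum_eq_zero fun i _ => ?_
      have factor : ∑ j : Fin n, ∑ k : Fin n,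
          (lam (γ t) i * g (γ t) j k) * (deriv γ t i * deriv γ t j * deriv γ t k)
          = (lam (γ t) i * deriv γ t i)
            * ∑ j : Fin n, ∑ k : Fin n, g (γ t) j k * deriv γ t j * deriv γ t k := by
        rw [Finset.mul_sum]
        refine Finset.sum_congr rfl fun j _ => ?_
        rw [Finset.mul_sum]
        exact Finset.sum_congr rfl fun k _ => by ring
      rw [factor, hlight t, mul_zero]
    have hR2 : ∑ i : Fin n, ∑ j : Fin n, ∑ k : Fin n,
        (lam (γ t) j * g (γ t) i k) * (deriv γ t i * deriv γ t j * deriv γ t k) = 0 := by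
      rw [Finset.sum_comm]
      refine Finset.sum_eq_zero fun j _ => ?_
      have factor : ∑ i : Fin n, ∑ k : Fin n,
          (lam (γ t) j * g (γ t) i k) * (deriv γ t i * deriv γ t j * deriv γ t k)
          = (lam (γ t) j * deriv γ t j)
            * ∑ i : Fin n, ∑ k : Fin n, g (γ t) i k * deriv γ t i * deriv γ t k := by
        rw [Finset.mul_sum]
        refine Finset.sum_congr rfl fun i _ => ?_
        rw [Finset.mul_sum]
        exact Finset.sum_congr rfl fun k _ => by ring
      rw [factor, hlight t, mul_zero]
    rw [split, splitR, hL1, hL2, hL3, hR1, hR2] at main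
    linarith
  -- wrap up
  have hderiv_f : deriv f = F1 := funext fun t => (hf1 t).deriv
  have hdd : ∀ t, deriv (deriv f) t = 0 := by
    intro t
    rw [hderiv_f, (hf2 t).deriv, hS0 t]
  refine ⟨hdd, deriv f 0, f 0, ?_⟩
  have hdF1 : Differentiable ℝ F1 := fun t => (hf2 t).differentiableAt
  have hconstF1 : ∀ t, F1 t = F1 0 := by
    intro t
    have := is_const_of_deriv_eq_zero (f := F1) hdF1 (fun x => by rw [(hf2 x).deriv, hS0 x]) t 0
    exact this
  intro t
  set C₁ := deriv f 0 with hC₁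
  have hC₁' : C₁ = F1 0 := by rw [hC₁, hderiv_f]
  have hh : ∀ s, HasDerivAt (fun u => f u - C₁ * u) 0 s := by
    intro s
    have h1 : HasDerivAt (fun u => C₁ * u) C₁ s := by
      simpa using (hasDerivAt_id s).const_mul C₁
    have := (hf1 s).sub h1
    have e : F1 s - C₁ = 0 := by rw [hC₁', hconstF1 s]; ring
    rwa [e] at this
  have hconst : (f t - C₁ * t) = (f 0 - C₁ * 0) :=
    is_const_of_deriv_eq_zero (fun s => (hh s).differentiableAt)
      (fun s => (hh s).deriv) t 0
  have : f t = C₁ * t + f 0 := by linarith [hconst]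
  exact this
end
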